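/- arXiv:1607.01993 — 4 statements merged into one kernel-verified Lean document; each statement's English description precedes it below -/
import Mathlib

section
/- Let A be a quantifier-free symbolic heap and let γ(A) denote its Presburger satisfiability encoding. Then for every stack s: s ⊨ γ(A) if and only if there exists a heap h with s,h ⊨ A. -/
/-! ## Array separation logic (ASL): syntax and stack-heap semantics -/

/-- Terms of array separation logic: variables (named by naturals), constants,
addition, and multiplication by a constant. -/
inductive Trm : Type where
  | var : ℕ → Trm
  | const : ℕ → Trm
  | add : Trm → Trm → Trm
  | smul : ℕ → Trm → Trm

/-- A stack maps variables to naturals. -/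
abbrev Stack := ℕ → ℕ

/-- Evaluation of terms under a stack. -/
def Trm.eval (s : Stack) : Trm → ℕ
  | .var x => s x
  | .const n => n
  | .add t u => t.eval s + u.eval s
  | .smul n t => n * t.eval s

/-- Variables occurring in a term. -/
def Trm.vars : Trm → Set ℕ
  | .var x => {x}
  | .const _ => ∅
  | .add t u => t.vars ∪ u.vars
  | .smul _ t => t.vars

/-- Pure formulas: conjunctions of atomic arithmetic constraints. -/
inductive PureF : Type where
  | tru : PureF
  | eq : Trm → Trm → PureF
  | ne : Trm → Trm → PureF
  | le : Trm → Trm → PureF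
  | lt : Trm → Trm → PureF
  | and : PureF → PureF → PureF

/-- Satisfaction of pure formulas (depends only on the stack). -/
def PureF.sat (s : Stack) : PureF → Prop
  | .tru => True
  | .eq t u => t.eval s = u.eval s
  | .ne t u => t.eval s ≠ u.eval s
  | .le t u => t.eval s ≤ u.eval s
  | .lt t u => t.eval s < u.eval s
  | .and p q => p.sat s ∧ q.sat s

def PureF.vars : PureF → Set ℕ
  | .tru => ∅
  | .eq t u => t.vars ∪ u.vars
  | .ne t u => t.vars ∪ u.vars
  | .le t u => t.vars ∪ u.vars
  | .lt t u => t.vars ∪ u.vars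
  | .and p q => p.vars ∪ q.vars

/-- The (top-level) terms occurring in a pure formula. -/
def PureF.trms : PureF → List Trm
  | .tru => []
  | .eq t u => [t, u]
  | .ne t u => [t, u]
  | .le t u => [t, u]
  | .lt t u => [t, u]
  | .and p q => p.trms ++ q.trms

/-- The conjuncts of a pure formula. -/
def PureF.conjuncts : PureF → List PureF
  | .and p q => p.conjuncts ++ q.conjuncts
  | p => [p]

/-- Finite conjunction. -/
def bigAnd : List PureF → PureF
  | [] => .tru
  | p :: ps => .and p (bigAnd ps)

/-- Spatial formulas: `emp`, points-to, arrays, and separating conjunction. -/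
inductive Spatial : Type where
  | emp : Spatial
  | pto : Trm → Trm → Spatial
  | arr : Trm → Trm → Spatial
  | star : Spatial → Spatial → Spatial

/-- Heaps: finite partial functions from ℕ (locations) to ℕ (values). -/
abbrev Heap := Finmap (fun _ : ℕ => ℕ)

/-- Satisfaction of spatial formulas. -/
def Spatial.sat (s : Stack) : Spatial → Heap → Prop
  | .emp, h => h = ∅
  | .pto t u, h =>
      h.keys = {Trm.eval s t} ∧ Finmap.lookup (Trm.eval s t) h = some (Trm.eval s u)
  | .arr t u, h =>
      Trm.eval s t ≤ Trm.eval s u ∧ h.keys = Finset.Icc (Trm.eval s t) (Trm.eval s u)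
  | .star F G, h =>
      ∃ h₁ h₂ : Heap, h₁.Disjoint h₂ ∧ h = h₁ ∪ h₂ ∧ F.sat s h₁ ∧ G.sat s h₂

def Spatial.vars : Spatial → Set ℕ
  | .emp => ∅
  | .pto t u => t.vars ∪ u.vars
  | .arr t u => t.vars ∪ u.vars
  | .star F G => F.vars ∪ G.vars

/-- The (top-level) terms occurring in a spatial formula. -/
def Spatial.trms : Spatial → List Trm
  | .emp => []
  | .pto t u => [t, u]
  | .arr t u => [t, u]
  | .star F G => F.trms ++ G.trms

/-- The points-to atoms of a spatial formula, as (address, value) pairs. -/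
def Spatial.ptos : Spatial → List (Trm × Trm)
  | .emp => []
  | .pto t u => [(t, u)]
  | .arr _ _ => []
  | .star F G => F.ptos ++ G.ptos

/-- The array atoms of a spatial formula, as endpoint pairs. -/
def Spatial.arrs : Spatial → List (Trm × Trm)
  | .emp => []
  | .pto _ _ => []
  | .arr t u => [(t, u)]
  | .star F G => F.arrs ++ G.arrs

/-- The arrays of the array abstraction `⟨A⟩`: each points-to `c ↦ d` is
replaced by the single-cell array `array(c,c)`. -/
def Spatial.absArrays : Spatial → List (Trm × Trm)
  | .emp => []
  | .pto t _ => [(t, t)]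
  | .arr t u => [(t, u)]
  | .star F G => F.absArrays ++ G.absArrays

/-- Finite separating conjunction. -/
def bigStar : List Spatial → Spatial
  | [] => .emp
  | F :: Fs => .star F (bigStar Fs)

/-- Quantifier-free symbolic heaps `Π : F`. -/
structure SymHeap : Type where
  pure : PureF
  spatial : Spatial

/-- Satisfaction of quantifier-free symbolic heaps. -/
def SymHeap.sat (s : Stack) (h : Heap) (A : SymHeap) : Prop :=
  A.pure.sat s ∧ A.spatial.sat s h

def SymHeap.vars (A : SymHeap) : Set ℕ := A.pure.vars ∪ A.spatial.vars

/-- All (top-level) terms occurring in a symbolic heap. -/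
def SymHeap.trms (A : SymHeap) : List Trm := A.pure.trms ++ A.spatial.trms

/-- Lifting `*` to symbolic heaps: conjoin pure parts, `*`-conjoin spatial parts. -/
def SymHeap.star (A X : SymHeap) : SymHeap :=
  ⟨.and A.pure X.pure, .star A.spatial X.spatial⟩

/-- Satisfiability of a symbolic heap. -/
def SymHeap.Satisfiable (A : SymHeap) : Prop := ∃ (s : Stack) (h : Heap), A.sat s h

/-- Semantic entailment between quantifier-free symbolic heaps. -/
def Entails (A B : SymHeap) : Prop := ∀ (s : Stack) (h : Heap), A.sat s h → B.sat s h

/-- Existentially quantified symbolic heaps `∃ z⃗. Π : F`. -/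
structure QSymHeap : Type where
  bound : List ℕ
  body : SymHeap

/-- Satisfaction of quantified symbolic heaps: some extension of the stack on the
bound variables satisfies the body. -/
def QSymHeap.sat (s : Stack) (h : Heap) (B : QSymHeap) : Prop :=
  ∃ s' : Stack, (∀ x : ℕ, x ∉ B.bound → s' x = s x) ∧ B.body.sat s' h

/-! ## The arithmetic encodings γ, β, φ, ψ₁, ψ₂, χ (interpreted over stacks) -/

/-- `s ⊨ γ(A)`: the Presburger satisfiability encoding of `A`, i.e. the pure part
of `A` together with well-definedness and pairwise disjointness of the arrays of
the array abstraction `⟨A⟩`. -/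
def gammaSat (A : SymHeap) (s : Stack) : Prop :=
  A.pure.sat s ∧
  (∀ p ∈ A.spatial.absArrays, Trm.eval s p.1 ≤ Trm.eval s p.2) ∧
  A.spatial.absArrays.Pairwise (fun p q =>
    Trm.eval s p.2 < Trm.eval s q.1 ∨ Trm.eval s q.2 < Trm.eval s p.1)

/-- `s ⊨ β(A,B)`. -/
def betaSat (A B : SymHeap) (s : Stack) : Prop :=
  gammaSat A s ∧ gammaSat B s ∧
  (∀ p ∈ B.spatial.ptos, ∀ q ∈ A.spatial.arrs,
      Trm.eval s p.1 < Trm.eval s q.1 ∨ Trm.eval s p.1 > Trm.eval s q.2) ∧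
  (∀ p ∈ A.spatial.ptos, ∀ q ∈ B.spatial.ptos,
      Trm.eval s p.1 ≠ Trm.eval s q.1 ∨ Trm.eval s p.2 = Trm.eval s q.2)

/-- The term set `Terms(A,B)`: all terms occurring in `A` and `B`, together with
the successor terms `b_i + 1`, `d_i + 1` (array right endpoints) and
`t_i + 1`, `v_i + 1` (points-to addresses). -/
def termSet (A B : SymHeap) : List Trm :=
  A.trms ++ B.trms ++
  (A.spatial.arrs.map fun p => Trm.add p.2 (Trm.const 1)) ++
  (B.spatial.arrs.map fun p => Trm.add p.2 (Trm.const 1)) ++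
  (A.spatial.ptos.map fun p => Trm.add p.1 (Trm.const 1)) ++
  (B.spatial.ptos.map fun p => Trm.add p.1 (Trm.const 1))

/-- A solution seed for the biabduction instance `(A,B)`. -/
def IsSolutionSeed (A B : SymHeap) (Δ : PureF) : Prop :=
  (∃ s : Stack, Δ.sat s) ∧
  (∀ s : Stack, Δ.sat s → betaSat A B s) ∧
  (∀ δ ∈ Δ.conjuncts, ∃ t ∈ termSet A B, ∃ u ∈ termSet A B,
      δ = PureF.lt t u ∨ δ = PureF.eq t u) ∧
  (∀ t ∈ termSet A B, ∀ u ∈ termSet A B, ∃ δ ∈ Δ.conjuncts,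
      δ = PureF.lt t u ∨ δ = PureF.lt u t ∨ δ = PureF.eq t u)

/-- The (quantifier-free) biabduction problem `(A,B)` has a solution. -/
def HasBiabductionSolution (A B : SymHeap) : Prop :=
  ∃ X Y : SymHeap, (A.star X).Satisfiable ∧ Entails (A.star X) (B.star Y)

/-- `s ⊨ φ(A,B)` (over the array abstractions of `A` and `B`). -/
def phiSat (A B : SymHeap) (s : Stack) : Prop :=
  ∃ x : ℕ,
    (∃ p ∈ A.spatial.absArrays, Trm.eval s p.1 ≤ x ∧ x ≤ Trm.eval s p.2) ∧
    ∀ q ∈ B.spatial.absArrays, x < Trm.eval s q.1 ∨ x > Trm.eval s q.2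

/-- `s ⊨ ψ₁(A,B)`: some points-to address of `B` is covered by an array of `A`. -/
def psi1Sat (A B : SymHeap) (s : Stack) : Prop :=
  ∃ p ∈ A.spatial.arrs, ∃ q ∈ B.spatial.ptos,
    Trm.eval s p.1 ≤ Trm.eval s q.1 ∧ Trm.eval s q.1 ≤ Trm.eval s p.2

/-- `s ⊨ ψ₂(A,B)`: some pointers of `A` and `B` share an address but disagree on
their contents. -/
def psi2Sat (A B : SymHeap) (s : Stack) : Prop :=
  ∃ p ∈ A.spatial.ptos, ∃ q ∈ B.spatial.ptos,
    Trm.eval s p.1 = Trm.eval s q.1 ∧ Trm.eval s p.2 ≠ Trm.eval s q.2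

/-- `s ⊨ χ(A, ∃z⃗.Q)`. -/
def chiSat (A : SymHeap) (zs : List ℕ) (Q : SymHeap) (s : Stack) : Prop :=
  gammaSat A s ∧
  ∀ s' : Stack, (∀ x : ℕ, x ∉ zs → s' x = s x) →
    (¬ gammaSat Q s' ∨ phiSat A Q s' ∨ phiSat Q A s' ∨
      psi1Sat A Q s' ∨ psi2Sat A Q s')

/-! A heap satisfying a spatial formula has, as its domain, the union of the intervals of the
array abstraction; a separating conjunction therefore forces these intervals to be nonempty and
pairwise disjoint, which is exactly the spatial part of γ. Conversely, given such intervals,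
heaps for the atoms can be chosen with exactly these domains, and they combine disjointly. -/

theorem Finmap.disjoint_iff_disjoint_keys {α : Type*} {β : α → Type*} {s₁ s₂ : Finmap β} :
    s₁.Disjoint s₂ ↔ _root_.Disjoint s₁.keys s₂.keys := by
  simp only [Finmap.Disjoint, Finset.disjoint_left, Finmap.mem_keys]

theorem Finset.exists_finmap_keys_eq {α β : Type*} [DecidableEq α] (S : Finset α) (b : β) :
    ∃ h : Finmap (fun _ : α => β), h.keys = S :=
  ⟨(S.toList.map fun a => ⟨a, b⟩).toFinmap, by
    ext a
    simp [Finmap.mem_keys, Finmap.mem_list_toFinmap]⟩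

theorem exists_le_le_and_le_le_iff {α : Type*} [LinearOrder α] {a b c d : α} (hab : a ≤ b)
    (hcd : c ≤ d) : (∃ x, (a ≤ x ∧ x ≤ b) ∧ c ≤ x ∧ x ≤ d) ↔ ¬(b < c ∨ d < a) := by
  constructor
  · rintro ⟨x, ⟨hax, hxb⟩, hcx, hxd⟩ (hbc | hda)
    · exact (hbc.trans_le hcx).not_ge hxb
    · exact (hda.trans_le hax).not_ge hxd
  · rw [not_or, not_lt, not_lt]
    rintro ⟨hcb, had⟩
    exact ⟨max a c, ⟨le_max_left a c, max_le hab hcb⟩, le_max_right a c, max_le had hcd⟩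

namespace Spatial

variable (s : Stack)

def footprint : Spatial → Finset ℕ
  | emp => ∅
  | pto t _ => {t.eval s}
  | arr t u => Finset.Icc (t.eval s) (u.eval s)
  | star F G => F.footprint ∪ G.footprint

-- `gammaSat A s` is, by definition, `A.pure.sat s ∧ A.spatial.Separated s`.
def Separated (F : Spatial) : Prop :=
  (∀ p ∈ F.absArrays, p.1.eval s ≤ p.2.eval s) ∧
  F.absArrays.Pairwise fun p q => p.2.eval s < q.1.eval s ∨ q.2.eval s < p.1.eval s

variable {s}

theorem mem_footprint {F : Spatial} {x : ℕ} :
    x ∈ F.footprint s ↔ ∃ p ∈ F.absArrays, p.1.eval s ≤ x ∧ x ≤ p.2.eval s := by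
  induction F with
  | emp => simp [footprint, absArrays]
  | pto t u => simp [footprint, absArrays, le_antisymm_iff, and_comm]
  | arr t u => simp [footprint, absArrays]
  | star F G ihF ihG => simp [footprint, absArrays, ihF, ihG, or_and_right, exists_or]

theorem keys_eq_footprint_of_sat {F : Spatial} {h : Heap} (hF : F.sat s h) :
    h.keys = F.footprint s := by
  induction F generalizing h with
  | emp => rw [hF, Finmap.keys_empty]; rfl
  | pto t u => exact hF.1
  | arr t u => exact hF.2
  | star F G ihF ihG =>
    obtain ⟨h₁, h₂, -, rfl, hF, hG⟩ := hF
    rw [Finmap.keys_union, ihF hF, ihG hG]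
    rfl

theorem disjoint_footprint_iff {F G : Spatial}
    (hF : ∀ p ∈ F.absArrays, p.1.eval s ≤ p.2.eval s)
    (hG : ∀ q ∈ G.absArrays, q.1.eval s ≤ q.2.eval s) :
    Disjoint (F.footprint s) (G.footprint s) ↔
      ∀ p ∈ F.absArrays, ∀ q ∈ G.absArrays, p.2.eval s < q.1.eval s ∨ q.2.eval s < p.1.eval s := by
  simp only [Finset.disjoint_left, mem_footprint]
  constructor
  · intro hdisj p hp q hq
    by_contra hoverlap
    obtain ⟨x, hxp, hxq⟩ := (exists_le_le_and_le_le_iff (hF p hp) (hG q hq)).2 hoverlap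
    exact hdisj ⟨p, hp, hxp⟩ ⟨q, hq, hxq⟩
  · rintro hsep x ⟨p, hp, hxp⟩ ⟨q, hq, hxq⟩
    exact (exists_le_le_and_le_le_iff (hF p hp) (hG q hq)).1 ⟨x, hxp, hxq⟩ (hsep p hp q hq)

theorem separated_star_iff {F G : Spatial} :
    (star F G).Separated s ↔
      F.Separated s ∧ G.Separated s ∧ Disjoint (F.footprint s) (G.footprint s) := by
  simp only [Separated, absArrays, List.forall_mem_append, List.pairwise_append]
  constructor
  · rintro ⟨⟨hleF, hleG⟩, hpwF, hpwG, hcross⟩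
    exact ⟨⟨hleF, hpwF⟩, ⟨hleG, hpwG⟩, (disjoint_footprint_iff hleF hleG).2 hcross⟩
  · rintro ⟨⟨hleF, hpwF⟩, ⟨hleG, hpwG⟩, hdisj⟩
    exact ⟨⟨hleF, hleG⟩, hpwF, hpwG, (disjoint_footprint_iff hleF hleG).1 hdisj⟩

theorem separated_of_sat {F : Spatial} {h : Heap} (hF : F.sat s h) : F.Separated s := by
  induction F generalizing h with
  | emp | pto t u => simp [Separated, absArrays]
  | arr t u => simpa [Separated, absArrays] using hF.1
  | star F G ihF ihG =>
    obtain ⟨h₁, h₂, hdisj, -, hF, hG⟩ := hF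
    rw [separated_star_iff, ← keys_eq_footprint_of_sat hF, ← keys_eq_footprint_of_sat hG,
      ← Finmap.disjoint_iff_disjoint_keys]
    exact ⟨ihF hF, ihG hG, hdisj⟩

theorem exists_sat_of_separated {F : Spatial} (hF : F.Separated s) : ∃ h : Heap, F.sat s h := by
  induction F with
  | emp => exact ⟨∅, rfl⟩
  | pto t u =>
    exact ⟨Finmap.singleton (t.eval s) (u.eval s), Finmap.keys_singleton _ _,
      Finmap.lookup_singleton_eq⟩
  | arr t u =>
    obtain ⟨h, hkeys⟩ := (Finset.Icc (t.eval s) (u.eval s)).exists_finmap_keys_eq 0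
    exact ⟨h, hF.1 (t, u) (List.mem_singleton_self _), hkeys⟩
  | star F G ihF ihG =>
    obtain ⟨hsepF, hsepG, hdisj⟩ := separated_star_iff.1 hF
    obtain ⟨h₁, hF⟩ := ihF hsepF
    obtain ⟨h₂, hG⟩ := ihG hsepG
    rw [← keys_eq_footprint_of_sat hF, ← keys_eq_footprint_of_sat hG,
      ← Finmap.disjoint_iff_disjoint_keys] at hdisj
    exact ⟨h₁ ∪ h₂, h₁, h₂, hdisj, rfl, hF, hG⟩

theorem exists_sat_iff_separated (F : Spatial) : (∃ h : Heap, F.sat s h) ↔ F.Separated s :=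
  ⟨fun ⟨_, hF⟩ => separated_of_sat hF, exists_sat_of_separated⟩

end Spatial

/-- Lemma (γ): for any quantifier-free symbolic heap `A` and stack `s`,
`s ⊨ γ(A)` iff there is a heap `h` with `s,h ⊨ A`. -/
theorem stmt_2 (A : SymHeap) (s : Stack) :
    gammaSat A s ↔ ∃ h : Heap, A.sat s h := by
  simp only [SymHeap.sat, exists_and_left]
  exact and_congr_right fun _ => A.spatial.exists_sat_iff_separated.symm
end

section
/- Let (A, B) be a biabduction instance where A = Π : ⊛_{i=1}^n array(a_i,b_i) * ⊛_{i=1}^k (t_i ↦ u_i) and B = Π' : ⊛_{i=1}^m array(c_i,d_i) * ⊛_{i=1}^ℓ (v_i ↦ w_i) are quantifier-free symbolic heaps. If the biabduction problem (A,B) has a solution — i.e., there exist quantifier-free symbolic heaps X, Y such that A*X is satisfiable and A*X ⊨ B*Y — then the arithmetic formula β(A,B) is satisfiable over ℕ. -/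
/-! A model `(s, h)` of `A * X` is a model of `B * Y`, and its stack satisfies `β(A,B)`. The
γ-parts hold in every model. A pointer of `B` cannot lie inside an array of `A`: the contents of
an array cell may be changed without leaving `A * X`, whereas `B * Y` pins them. Pointers of `A`
and `B` at the same address read the same cell. -/

theorem Finmap.insert_union_of_notMem_left {α : Type*} {β : α → Type*} [DecidableEq α]
    {s₁ s₂ : Finmap β} {a : α} (b : β a) (ha : a ∉ s₁) :
    (s₁ ∪ s₂).insert a b = s₁ ∪ s₂.insert a b := by
  refine Finmap.ext_lookup fun x => ?_
  by_cases hx : x = a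
  · subst hx
    rw [Finmap.lookup_insert, Finmap.lookup_union_right ha, Finmap.lookup_insert]
  · by_cases hx₁ : x ∈ s₁
    · rw [Finmap.lookup_insert_of_ne _ hx, Finmap.lookup_union_left hx₁,
        Finmap.lookup_union_left hx₁]
    · rw [Finmap.lookup_insert_of_ne _ hx, Finmap.lookup_union_right hx₁,
        Finmap.lookup_union_right hx₁, Finmap.lookup_insert_of_ne _ hx]

namespace Spatial

variable {s : Stack}

theorem mem_absArrays_of_mem_arrs {F : Spatial} {p : Trm × Trm} (hp : p ∈ F.arrs) :
    p ∈ F.absArrays := by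
  induction F with
  | emp | pto => simp [arrs] at hp
  | arr => exact hp
  | star F G ihF ihG =>
    simp only [arrs, absArrays, List.mem_append] at hp ⊢
    exact hp.imp ihF ihG

theorem lookup_eq_of_mem_ptos {F : Spatial} {h : Heap} (hF : F.sat s h) {p : Trm × Trm}
    (hp : p ∈ F.ptos) : h.lookup (p.1.eval s) = some (p.2.eval s) := by
  induction F generalizing h with
  | emp | arr => simp [ptos] at hp
  | pto t u =>
    simp only [ptos, List.mem_singleton] at hp
    exact hp ▸ hF.2
  | star F G ihF ihG =>
    obtain ⟨h₁, h₂, hdisj, rfl, hF, hG⟩ := hF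
    rcases List.mem_append.1 hp with hp | hp
    · have hlk := ihF hF hp
      rwa [Finmap.lookup_union_left (Finmap.mem_of_lookup_eq_some hlk)]
    · have hlk := ihG hG hp
      rwa [Finmap.lookup_union_right fun h₁mem =>
        hdisj _ h₁mem (Finmap.mem_of_lookup_eq_some hlk)]

theorem eval_le_of_mem_absArrays {F : Spatial} {h : Heap} (hF : F.sat s h) {p : Trm × Trm}
    (hp : p ∈ F.absArrays) : p.1.eval s ≤ p.2.eval s := by
  induction F generalizing h with
  | emp => simp [absArrays] at hp
  | pto t u =>
    simp only [absArrays, List.mem_singleton] at hp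
    exact hp ▸ le_rfl
  | arr t u =>
    simp only [absArrays, List.mem_singleton] at hp
    exact hp ▸ hF.1
  | star F G ihF ihG =>
    obtain ⟨h₁, h₂, -, -, hF, hG⟩ := hF
    exact (List.mem_append.1 hp).elim (ihF hF) (ihG hG)

theorem mem_of_mem_absArrays {F : Spatial} {h : Heap} (hF : F.sat s h) {p : Trm × Trm}
    (hp : p ∈ F.absArrays) {x : ℕ} (hx : x ∈ Set.Icc (p.1.eval s) (p.2.eval s)) : x ∈ h := by
  induction F generalizing h with
  | emp => simp [absArrays] at hp
  | pto t u =>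
    simp only [absArrays, List.mem_singleton] at hp
    subst hp
    rw [← Finmap.mem_keys, hF.1, Finset.mem_singleton]
    exact le_antisymm hx.2 hx.1
  | arr t u =>
    simp only [absArrays, List.mem_singleton] at hp
    subst hp
    rw [← Finmap.mem_keys, hF.2, Finset.mem_Icc]
    exact hx
  | star F G ihF ihG =>
    obtain ⟨h₁, h₂, -, rfl, hF, hG⟩ := hF
    rw [Finmap.mem_union]
    exact (List.mem_append.1 hp).imp (ihF hF) (ihG hG)

theorem absArrays_pairwise_disjoint {F : Spatial} {h : Heap} (hF : F.sat s h) :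
    F.absArrays.Pairwise fun p q => p.2.eval s < q.1.eval s ∨ q.2.eval s < p.1.eval s := by
  induction F generalizing h with
  | emp | pto | arr => simp [absArrays]
  | star F G ihF ihG =>
    obtain ⟨h₁, h₂, hdisj, -, hF, hG⟩ := hF
    refine List.pairwise_append.2 ⟨ihF hF, ihG hG, fun p hp q hq => ?_⟩
    by_contra! hpq
    -- the larger of the two left endpoints lies in both arrays
    set x := max (p.1.eval s) (q.1.eval s)
    exact hdisj x
      (mem_of_mem_absArrays hF hp ⟨le_max_left _ _, max_le (eval_le_of_mem_absArrays hF hp) hpq.1⟩)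
      (mem_of_mem_absArrays hG hq ⟨le_max_right _ _, max_le hpq.2 (eval_le_of_mem_absArrays hG hq)⟩)

theorem sat_insert_of_mem_arrs {F : Spatial} {h : Heap} (hF : F.sat s h) {p : Trm × Trm}
    (hp : p ∈ F.arrs) {x : ℕ} (hx : x ∈ Set.Icc (p.1.eval s) (p.2.eval s)) (y : ℕ) :
    F.sat s (h.insert x y) := by
  induction F generalizing h with
  | emp | pto => simp [arrs] at hp
  | arr t u =>
    simp only [arrs, List.mem_singleton] at hp
    subst hp
    refine ⟨hF.1, ?_⟩
    rw [← hF.2]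
    ext a
    simp only [Finmap.mem_keys, Finmap.mem_insert, or_iff_right_iff_imp]
    rintro rfl
    rw [← Finmap.mem_keys, hF.2, Finset.mem_Icc]
    exact hx
  | star F G ihF ihG =>
    obtain ⟨h₁, h₂, hdisj, rfl, hF, hG⟩ := hF
    rcases List.mem_append.1 hp with hp | hp
    · have hx₁ : x ∈ h₁ := mem_of_mem_absArrays hF (mem_absArrays_of_mem_arrs hp) hx
      refine ⟨h₁.insert x y, h₂, fun a ha => ?_, Finmap.insert_union, ihF hF hp, hG⟩
      rcases Finmap.mem_insert.1 ha with rfl | ha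
      exacts [hdisj _ hx₁, hdisj _ ha]
    · have hx₂ : x ∈ h₂ := mem_of_mem_absArrays hG (mem_absArrays_of_mem_arrs hp) hx
      have hx₁ : x ∉ h₁ := fun hx₁ => hdisj _ hx₁ hx₂
      refine ⟨h₁, h₂.insert x y, fun a ha ha' => ?_,
        Finmap.insert_union_of_notMem_left y hx₁, hF, ihG hG hp⟩
      rcases Finmap.mem_insert.1 ha' with rfl | ha'
      exacts [hx₁ ha, hdisj _ ha ha']

end Spatial

namespace SymHeap

variable {s : Stack} {h : Heap}

theorem gammaSat_of_sat {A : SymHeap} (hA : A.sat s h) : gammaSat A s :=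
  ⟨hA.1, fun _ => A.spatial.eval_le_of_mem_absArrays hA.2,
    A.spatial.absArrays_pairwise_disjoint hA.2⟩

theorem exists_sat_of_sat_star {A X : SymHeap} (hAX : (A.star X).sat s h) :
    ∃ h₁, A.sat s h₁ := by
  obtain ⟨⟨hA, -⟩, h₁, -, -, -, hA₁, -⟩ := hAX
  exact ⟨h₁, hA, hA₁⟩

variable {A X B Y : SymHeap}

theorem eval_pto_notMem_arr (hAX : (A.star X).sat s h) (hent : Entails (A.star X) (B.star Y))
    {p q : Trm × Trm} (hp : p ∈ B.spatial.ptos)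
    (hq : q ∈ A.spatial.arrs) : p.1.eval s < q.1.eval s ∨ q.2.eval s < p.1.eval s := by
  by_contra! hpq
  have hAX' : (A.star X).sat s (h.insert (p.1.eval s) (p.2.eval s + 1)) :=
    ⟨hAX.1, Spatial.sat_insert_of_mem_arrs (F := .star A.spatial X.spatial) hAX.2
      (List.mem_append_left _ hq) hpq _⟩
  have hlk := Spatial.lookup_eq_of_mem_ptos (F := .star B.spatial Y.spatial) (hent _ _ hAX').2
    (List.mem_append_left _ hp)
  simp [Finmap.lookup_insert] at hlk

theorem eval_pto_agree (hAX : (A.star X).sat s h) (hent : Entails (A.star X) (B.star Y))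
    {p q : Trm × Trm} (hp : p ∈ A.spatial.ptos) (hq : q ∈ B.spatial.ptos)
    (hpq : p.1.eval s = q.1.eval s) : p.2.eval s = q.2.eval s := by
  have hA := Spatial.lookup_eq_of_mem_ptos (F := .star A.spatial X.spatial) hAX.2
    (List.mem_append_left _ hp)
  have hB := Spatial.lookup_eq_of_mem_ptos (F := .star B.spatial Y.spatial) (hent _ _ hAX).2
    (List.mem_append_left _ hq)
  rw [hpq, hB, Option.some_inj] at hA
  exact hA.symm

end SymHeap

theorem stmt_6_general (A B : SymHeap)
    (hsol : HasBiabductionSolution A B) :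
    ∃ s : Stack, betaSat A B s := by
  obtain ⟨X, Y, ⟨s, h, hAX⟩, hent⟩ := hsol
  obtain ⟨_, hA⟩ := SymHeap.exists_sat_of_sat_star hAX
  obtain ⟨_, hB⟩ := SymHeap.exists_sat_of_sat_star (hent s h hAX)
  exact ⟨s, SymHeap.gammaSat_of_sat hA, SymHeap.gammaSat_of_sat hB,
    fun p hp q hq => SymHeap.eval_pto_notMem_arr hAX hent hp hq,
    fun p hp q hq => (eq_or_ne _ _).symm.imp_right (SymHeap.eval_pto_agree hAX hent hp hq)⟩

/-- Proposition (solution ⟹ β satisfiable): if the biabduction problem `(A,B)`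
(with `A`, `B` satisfiable quantifier-free symbolic heaps) has a solution, then
`β(A,B)` is satisfiable over ℕ. -/
theorem stmt_6 (A B : SymHeap) (hA : A.Satisfiable) (hB : B.Satisfiable)
    (hsol : HasBiabductionSolution A B) :
    ∃ s : Stack, betaSat A B s :=
  stmt_6_general A B hsol
end

section
/- Let (A, B) be a biabduction instance of quantifier-free symbolic heaps. The biabduction problem (A,B) has a solution — i.e., there exist quantifier-free symbolic heaps X, Y such that A*X is satisfiable and A*X ⊨ B*Y — if and only if the arithmetic formula β(A,B) is satisfiable over ℕ. -/
/-!
A model of a spatial formula `F` is exactly a heap whose domain is the union of the intervals of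
the array abstraction `⟨F⟩`, these intervals being nonempty and pairwise disjoint, and whose
values at the points-to addresses of `F` are the prescribed ones (`Spatial.sat_iff`).

If `A * X ⊨ B * Y` and `A * X` has a model, then `γ(A)` and `γ(B)` hold in it; a pointer of `B`
cannot lie in an array of `A`, since overwriting that cell keeps a model of `A * X` but not of
`B * Y`; and pointers of `A` and `B` at the same address read the same cell.

Conversely, given `s ⊨ β(A,B)`, let `X` pin every term in sight to its value under `s` and
allocate the cells of `⟨B⟩` outside `⟨A⟩` as pointers carrying the values of `B`, and let `Y`
allocate the cells of `⟨A⟩` outside `⟨B⟩` as arrays. Every model of `A * X` has domain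
`⟨A⟩ ∪ ⟨B⟩`, and by `β` each pointer of `B` is read either from a pointer of `A` with the same
contents or from `X`.
-/

open Finmap

def heapOf (D : Finset ℕ) (f : ℕ → ℕ) : Heap :=
  keysLookupEquiv.symm ⟨(D, fun n => if n ∈ D then some (f n) else none), fun n => by
    by_cases hn : n ∈ D <;> simp [hn]⟩

@[simp]
lemma keys_heapOf (D : Finset ℕ) (f : ℕ → ℕ) : (heapOf D f).keys = D := by
  simp [heapOf]

@[simp]
lemma lookup_heapOf (D : Finset ℕ) (f : ℕ → ℕ) (n : ℕ) :
    (heapOf D f).lookup n = if n ∈ D then some (f n) else none := by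
  simp [heapOf]

lemma Heap.exists_split {h : Heap} {D₁ D₂ : Finset ℕ} (hD : Disjoint D₁ D₂)
    (hk : h.keys = D₁ ∪ D₂) :
    ∃ h₁ h₂ : Heap, h₁.Disjoint h₂ ∧ h = h₁ ∪ h₂ ∧ h₁.keys = D₁ ∧ h₂.keys = D₂ := by
  set g : ℕ → ℕ := fun n => (h.lookup n).getD 0
  have hg : ∀ n ∈ D₁ ∪ D₂, h.lookup n = some (g n) := fun n hn => by
    obtain ⟨b, hb⟩ := mem_iff.1 (mem_keys.1 (hk ▸ hn))
    simp [g, hb]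
  refine ⟨heapOf D₁ g, heapOf D₂ g, fun n h₁ h₂ => ?_, ext_lookup fun n => ?_, by simp, by simp⟩
  · rw [← mem_keys, keys_heapOf] at h₁ h₂
    exact Finset.disjoint_left.1 hD h₁ h₂
  by_cases h₁ : n ∈ D₁
  · rw [lookup_union_left (by simpa [← mem_keys]), lookup_heapOf, if_pos h₁,
      hg n (Finset.mem_union_left _ h₁)]
  rw [lookup_union_right (by simpa [← mem_keys]), lookup_heapOf]
  split_ifs with h₂
  · exact hg n (Finset.mem_union_right _ h₂)
  · rw [lookup_eq_none, ← mem_keys, hk]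
    simp [h₁, h₂]

namespace Spatial

variable {s : Stack} {F G : Spatial} {h : Heap}

def absDom (s : Stack) : Spatial → Finset ℕ
  | .emp => ∅
  | .pto t _ => {t.eval s}
  | .arr t u => Finset.Icc (t.eval s) (u.eval s)
  | .star F G => F.absDom s ∪ G.absDom s

lemma mem_absDom {n : ℕ} :
    n ∈ F.absDom s ↔ ∃ p ∈ F.absArrays, p.1.eval s ≤ n ∧ n ≤ p.2.eval s := by
  induction F with
  | emp => simp [absDom, absArrays]
  | pto t u => simp [absDom, absArrays, le_antisymm_iff, and_comm]
  | arr t u => simp [absDom, absArrays]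
  | star F G ihF ihG => simp only [absDom, absArrays, Finset.mem_union, ihF, ihG,
      List.mem_append, or_and_right, exists_or]

lemma ptos_absArrays {p : Trm × Trm} (hp : p ∈ F.ptos) : (p.1, p.1) ∈ F.absArrays := by
  induction F with
  | emp | arr => simp [ptos] at hp
  | pto => simp_all [ptos, absArrays]
  | star F G ihF ihG =>
    simp only [ptos, absArrays, List.mem_append] at hp ⊢
    exact hp.imp ihF ihG

lemma arrs_absArrays {p : Trm × Trm} (hp : p ∈ F.arrs) : p ∈ F.absArrays := by
  induction F with
  | emp | pto => simp [arrs] at hp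
  | arr => simp_all [arrs, absArrays]
  | star F G ihF ihG =>
    simp only [arrs, absArrays, List.mem_append] at hp ⊢
    exact hp.imp ihF ihG

lemma mem_arrs_or_ptos_of_mem_absArrays {p : Trm × Trm} (hp : p ∈ F.absArrays) :
    p ∈ F.arrs ∨ ∃ u, (p.1, u) ∈ F.ptos ∧ p.2 = p.1 := by
  induction F with
  | emp => simp [absArrays] at hp
  | pto => simp_all [absArrays, ptos]
  | arr => simp_all [absArrays, arrs]
  | star F G ihF ihG =>
    simp only [arrs, ptos, absArrays, List.mem_append] at hp ⊢
    rcases hp with hp | hp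
    · rcases ihF hp with h | ⟨u, hu, h⟩
      exacts [Or.inl (Or.inl h), Or.inr ⟨u, Or.inl hu, h⟩]
    · rcases ihG hp with h | ⟨u, hu, h⟩
      exacts [Or.inl (Or.inr h), Or.inr ⟨u, Or.inr hu, h⟩]

lemma mem_absDom_of_mem_ptos {p : Trm × Trm} (hp : p ∈ F.ptos) : p.1.eval s ∈ F.absDom s :=
  mem_absDom.2 ⟨_, ptos_absArrays hp, le_rfl, le_rfl⟩

lemma mem_absDom_of_mem_arrs {p : Trm × Trm} (hp : p ∈ F.arrs) {n : ℕ}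
    (h₁ : p.1.eval s ≤ n) (h₂ : n ≤ p.2.eval s) : n ∈ F.absDom s :=
  mem_absDom.2 ⟨p, arrs_absArrays hp, h₁, h₂⟩

def Consistent (s : Stack) (F : Spatial) : Prop :=
  (∀ p ∈ F.absArrays, p.1.eval s ≤ p.2.eval s) ∧
  F.absArrays.Pairwise (fun p q => p.2.eval s < q.1.eval s ∨ q.2.eval s < p.1.eval s)

lemma consistent_star_iff :
    (F.star G).Consistent s ↔
      F.Consistent s ∧ G.Consistent s ∧ Disjoint (F.absDom s) (G.absDom s) := by
  simp only [Consistent, absArrays, List.forall_mem_append, List.pairwise_append]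
  constructor
  · rintro ⟨⟨hbF, hbG⟩, hpF, hpG, hcross⟩
    refine ⟨⟨hbF, hpF⟩, ⟨hbG, hpG⟩, Finset.disjoint_left.2 fun n hF hG => ?_⟩
    obtain ⟨p, hp, hpn⟩ := mem_absDom.1 hF
    obtain ⟨q, hq, hqn⟩ := mem_absDom.1 hG
    have := hcross p hp q hq
    omega
  · rintro ⟨⟨hbF, hpF⟩, ⟨hbG, hpG⟩, hdisj⟩
    refine ⟨⟨hbF, hbG⟩, hpF, hpG, fun p hp q hq => ?_⟩
    by_contra! hpq
    have hbp := hbF p hp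
    have hbq := hbG q hq
    exact Finset.disjoint_left.1 hdisj
      (mem_absDom.2 ⟨p, hp, le_max_left _ (q.1.eval s), by omega⟩)
      (mem_absDom.2 ⟨q, hq, le_max_right (p.1.eval s) _, by omega⟩)

lemma Consistent.eval_snd_eq_of_mem_ptos (hF : F.Consistent s) {p q : Trm × Trm}
    (hp : p ∈ F.ptos) (hq : q ∈ F.ptos) (hpq : p.1.eval s = q.1.eval s) :
    p.2.eval s = q.2.eval s := by
  induction F with
  | emp | arr => simp [ptos] at hp
  | pto => simp_all [ptos]
  | star F G ihF ihG =>
    obtain ⟨hF, hG, hdisj⟩ := consistent_star_iff.1 hF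
    simp only [ptos, List.mem_append] at hp hq
    rcases hp with hp | hp <;> rcases hq with hq | hq
    · exact ihF hF hp hq
    · exact absurd (hpq ▸ mem_absDom_of_mem_ptos hq)
        (Finset.disjoint_left.1 hdisj (mem_absDom_of_mem_ptos hp))
    · exact absurd (hpq ▸ mem_absDom_of_mem_ptos hq)
        (Finset.disjoint_right.1 hdisj (mem_absDom_of_mem_ptos hp))
    · exact ihG hG hp hq

lemma Consistent.eval_fst_notMem_of_mem_arrs (hF : F.Consistent s) {p q : Trm × Trm}
    (hp : p ∈ F.ptos) (hq : q ∈ F.arrs) :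
    p.1.eval s < q.1.eval s ∨ q.2.eval s < p.1.eval s := by
  induction F with
  | emp | arr => simp [ptos] at hp
  | pto => simp [arrs] at hq
  | star F G ihF ihG =>
    obtain ⟨hF, hG, hdisj⟩ := consistent_star_iff.1 hF
    simp only [ptos, arrs, List.mem_append] at hp hq
    by_contra! hin
    rcases hp with hp | hp <;> rcases hq with hq | hq
    · exact ihF hF hp hq |>.elim (by omega) (by omega)
    · exact Finset.disjoint_left.1 hdisj (mem_absDom_of_mem_ptos hp)
        (mem_absDom_of_mem_arrs hq hin.1 hin.2)
    · exact Finset.disjoint_right.1 hdisj (mem_absDom_of_mem_ptos hp)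
        (mem_absDom_of_mem_arrs hq hin.1 hin.2)
    · exact ihG hG hp hq |>.elim (by omega) (by omega)

theorem sat_iff :
    F.sat s h ↔ F.Consistent s ∧ h.keys = F.absDom s ∧
      ∀ p ∈ F.ptos, h.lookup (p.1.eval s) = some (p.2.eval s) := by
  induction F generalizing h with
  | emp =>
    simp only [sat, Consistent, absArrays, absDom, ptos]
    refine ⟨fun h => by simp [h], fun ⟨_, hk, _⟩ => ext_lookup fun n => ?_⟩
    rw [lookup_empty, lookup_eq_none, ← mem_keys, hk]
    exact Finset.notMem_empty n
  | pto t u => simp [sat, Consistent, absArrays, absDom, ptos]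
  | arr t u => simp [sat, Consistent, absArrays, absDom, ptos]
  | star F G ihF ihG =>
    rw [consistent_star_iff]
    simp only [sat, ptos, absDom, List.forall_mem_append]
    constructor
    · rintro ⟨h₁, h₂, hd, rfl, h₁F, h₂G⟩
      obtain ⟨hF, hk₁, hl₁⟩ := ihF.1 h₁F
      obtain ⟨hG, hk₂, hl₂⟩ := ihG.1 h₂G
      refine ⟨⟨hF, hG, hk₁ ▸ hk₂ ▸ Finset.disjoint_left.2 fun n h₁ h₂ =>
          hd n (mem_keys.1 h₁) (mem_keys.1 h₂)⟩,
        by rw [keys_union, hk₁, hk₂], fun p hp => ?_, fun p hp => ?_⟩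
      · rw [lookup_union_left (by rw [← mem_keys, hk₁]; exact mem_absDom_of_mem_ptos hp)]
        exact hl₁ p hp
      · have hp₂ : p.1.eval s ∈ h₂ := by rw [← mem_keys, hk₂]; exact mem_absDom_of_mem_ptos hp
        rw [lookup_union_right fun hp₁ => hd _ hp₁ hp₂]
        exact hl₂ p hp
    · rintro ⟨⟨hF, hG, hdisj⟩, hk, hlF, hlG⟩
      obtain ⟨h₁, h₂, hd, rfl, hk₁, hk₂⟩ := Heap.exists_split hdisj hk
      refine ⟨h₁, h₂, hd, rfl, ihF.2 ⟨hF, hk₁, fun p hp => ?_⟩, ihG.2 ⟨hG, hk₂, fun p hp => ?_⟩⟩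
      · rw [← lookup_union_left (s₂ := h₂)
          (by rw [← mem_keys, hk₁]; exact mem_absDom_of_mem_ptos hp)]
        exact hlF p hp
      · have hp₂ : p.1.eval s ∈ h₂ := by rw [← mem_keys, hk₂]; exact mem_absDom_of_mem_ptos hp
        rw [← lookup_union_right (s₁ := h₁) fun hp₁ => hd _ hp₁ hp₂]
        exact hlG p hp

lemma lookup_of_sat (hs : F.sat s h) {p : Trm × Trm} (hp : p ∈ F.ptos) :
    h.lookup (p.1.eval s) = some (p.2.eval s) :=
  (sat_iff.1 hs).2.2 p hp

lemma Consistent.sat_heapOf (hF : F.Consistent s) {f : ℕ → ℕ}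
    (hf : ∀ p ∈ F.ptos, f (p.1.eval s) = p.2.eval s) : F.sat s (heapOf (F.absDom s) f) :=
  sat_iff.2 ⟨hF, keys_heapOf _ _, fun p hp => by
    simp [mem_absDom_of_mem_ptos hp, hf p hp]⟩

lemma sat_insert (hs : F.sat s h) {q : Trm × Trm} (hq : q ∈ F.arrs) {n : ℕ}
    (h₁ : q.1.eval s ≤ n) (h₂ : n ≤ q.2.eval s) (c : ℕ) : F.sat s (h.insert n c) := by
  obtain ⟨hF, hk, hl⟩ := sat_iff.1 hs
  have hn : n ∈ h := by rw [← mem_keys, hk]; exact mem_absDom_of_mem_arrs hq h₁ h₂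
  refine sat_iff.2 ⟨hF, ?_, fun p hp => ?_⟩
  · ext m
    simp only [mem_keys, mem_insert, or_iff_right_of_imp fun hm : m = n => hm ▸ hn, ← hk]
  · have hpn : p.1.eval s ≠ n := by
      have := hF.eval_fst_notMem_of_mem_arrs hp hq
      omega
    rw [lookup_insert_of_ne _ hpn]
    exact hl p hp

lemma sat_congr {s' : Stack} (hs : ∀ t ∈ F.trms, t.eval s = t.eval s') :
    F.sat s h ↔ F.sat s' h := by
  induction F generalizing h with
  | emp => rfl
  | pto t u | arr t u =>
    simp only [trms, List.mem_cons, List.not_mem_nil, or_false, forall_eq_or_imp,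
      forall_eq] at hs
    simp only [sat]
    rw [hs.1, hs.2]
  | star F G ihF ihG =>
    simp only [trms, List.mem_append] at hs
    simp only [sat, ihF fun t ht => hs t (Or.inl ht), ihG fun t ht => hs t (Or.inr ht)]

end Spatial

def cells (D : Finset ℕ) : List (Trm × Trm) := D.sort.map fun n => (.const n, .const n)

def ptoCells (f : ℕ → ℕ) (D : Finset ℕ) : Spatial :=
  bigStar (D.sort.map fun n => .pto (.const n) (.const (f n)))

def arrCells (D : Finset ℕ) : Spatial :=
  bigStar (D.sort.map fun n => .arr (.const n) (.const n))

namespace Spatial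

variable {s : Stack} {F : Spatial} {D : Finset ℕ}

lemma absArrays_bigStar (Fs : List Spatial) : (bigStar Fs).absArrays = Fs.flatMap absArrays := by
  induction Fs with
  | nil => rfl
  | cons F Fs ih => simp [bigStar, absArrays, ih]

lemma ptos_bigStar (Fs : List Spatial) : (bigStar Fs).ptos = Fs.flatMap ptos := by
  induction Fs with
  | nil => rfl
  | cons F Fs ih => simp [bigStar, ptos, ih]

lemma absArrays_ptoCells (f : ℕ → ℕ) (D : Finset ℕ) : (ptoCells f D).absArrays = cells D := by
  rw [ptoCells, absArrays_bigStar, List.flatMap_map]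
  exact List.flatMap_pure_eq_map _ _

lemma absArrays_arrCells (D : Finset ℕ) : (arrCells D).absArrays = cells D := by
  rw [arrCells, absArrays_bigStar, List.flatMap_map]
  exact List.flatMap_pure_eq_map _ _

lemma ptos_ptoCells (f : ℕ → ℕ) (D : Finset ℕ) :
    (ptoCells f D).ptos = D.sort.map fun n => (.const n, .const (f n)) := by
  rw [ptoCells, ptos_bigStar, List.flatMap_map]
  exact List.flatMap_pure_eq_map _ _

lemma ptos_arrCells (D : Finset ℕ) : (arrCells D).ptos = [] := by
  simp [arrCells, ptos_bigStar, ptos]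

lemma consistent_of_absArrays_eq_cells (hF : F.absArrays = cells D) : F.Consistent s := by
  rw [Consistent, hF, cells, List.pairwise_map]
  refine ⟨by simp [Trm.eval], D.sortedLT_sort.pairwise.imp fun hlt => Or.inl ?_⟩
  simpa [Trm.eval] using hlt

lemma absDom_of_absArrays_eq_cells (hF : F.absArrays = cells D) : F.absDom s = D := by
  ext n
  simp [mem_absDom, hF, cells, Trm.eval, ← le_antisymm_iff]

lemma Consistent.sat_star_ptoCells (hF : F.Consistent s) {f : ℕ → ℕ}
    (hf : ∀ p ∈ F.ptos, f (p.1.eval s) = p.2.eval s) {D : Finset ℕ}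
    (hD : Disjoint (F.absDom s) D) : (F.star (ptoCells f D)).sat s (heapOf (F.absDom s ∪ D) f) := by
  have hC := absArrays_ptoCells f D
  have hFC : (F.star (ptoCells f D)).Consistent s := consistent_star_iff.2
    ⟨hF, consistent_of_absArrays_eq_cells hC, by rwa [absDom_of_absArrays_eq_cells hC]⟩
  have := hFC.sat_heapOf (f := f) <| by
    simp only [ptos, List.forall_mem_append, ptos_ptoCells, List.forall_mem_map]
    exact ⟨hf, fun _ _ => rfl⟩
  rwa [absDom, absDom_of_absArrays_eq_cells hC] at this

end Spatial

lemma PureF.sat_congr {P : PureF} {s s' : Stack} (hs : ∀ t ∈ P.trms, t.eval s = t.eval s') :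
    P.sat s ↔ P.sat s' := by
  induction P with
  | tru => rfl
  | eq t u | ne t u | le t u | lt t u =>
    simp only [trms, List.mem_cons, List.not_mem_nil, or_false, forall_eq_or_imp,
      forall_eq] at hs
    simp only [sat, hs]
  | and P Q ihP ihQ =>
    simp only [trms, List.mem_append] at hs
    simp only [sat, ihP fun t ht => hs t (Or.inl ht), ihQ fun t ht => hs t (Or.inr ht)]

lemma bigAnd_sat_iff {s : Stack} {Ps : List PureF} : (bigAnd Ps).sat s ↔ ∀ P ∈ Ps, P.sat s := by
  induction Ps with
  | nil => simp [bigAnd, PureF.sat]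
  | cons P Ps ih => simp [bigAnd, PureF.sat, ih]

def pin (s₀ : Stack) (ts : List Trm) : PureF :=
  bigAnd (ts.map fun t => .eq t (.const (t.eval s₀)))

lemma sat_pin_iff {s s₀ : Stack} {ts : List Trm} :
    (pin s₀ ts).sat s ↔ ∀ t ∈ ts, t.eval s = t.eval s₀ := by
  simp [pin, bigAnd_sat_iff, PureF.sat, Trm.eval]

lemma exists_fun_eq_of_functional {α β : Type*} [Inhabited β] {l : List (α × β)}
    (hl : ∀ p ∈ l, ∀ q ∈ l, p.1 = q.1 → p.2 = q.2) : ∃ f : α → β, ∀ p ∈ l, f p.1 = p.2 := by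
  classical
  refine ⟨fun a => if h : ∃ p ∈ l, p.1 = a then h.choose.2 else default, fun p hp => ?_⟩
  have h : ∃ q ∈ l, q.1 = p.1 := ⟨p, hp, rfl⟩
  simp only [dif_pos h]
  exact hl _ h.choose_spec.1 _ hp h.choose_spec.2

namespace SymHeap

open Spatial

variable {A B X Y : SymHeap} {s : Stack} {h : Heap}

lemma _root_.gammaSat.consistent (hA : gammaSat A s) : A.spatial.Consistent s := hA.2

lemma gammaSat_of_sat_star (hs : (A.star X).sat s h) : gammaSat A s := by
  obtain ⟨⟨hA, -⟩, _, _, -, -, hA₁, -⟩ := hs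
  exact ⟨hA, (sat_iff.1 hA₁).1⟩

theorem betaSat_of_sat_of_entails (hs : (A.star X).sat s h)
    (hXY : Entails (A.star X) (B.star Y)) : betaSat A B s := by
  have hBY := hXY s h hs
  refine ⟨gammaSat_of_sat_star hs, gammaSat_of_sat_star hBY, fun p hp q hq => ?_,
    fun p hp q hq => or_iff_not_imp_left.2 fun hpq => ?_⟩
  · by_contra! hin
    have hs' : (A.star X).sat s (h.insert (p.1.eval s) (p.2.eval s + 1)) :=
      ⟨hs.1, sat_insert hs.2 (List.mem_append_left _ hq) hin.1 hin.2 _⟩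
    simpa using lookup_of_sat (hXY s _ hs').2 (List.mem_append_left _ hp)
  · have hA := lookup_of_sat hs.2 (List.mem_append_left _ hp)
    rw [not_ne_iff.1 hpq, lookup_of_sat hBY.2 (List.mem_append_left _ hq)] at hA
    exact (Option.some_injective _ hA).symm

lemma exists_fun_eq_of_betaSat (hβ : betaSat A B s) :
    ∃ f : ℕ → ℕ, ∀ p ∈ A.spatial.ptos ++ B.spatial.ptos, f (p.1.eval s) = p.2.eval s := by
  obtain ⟨f, hf⟩ := exists_fun_eq_of_functional
    (l := (A.spatial.ptos ++ B.spatial.ptos).map fun p => (p.1.eval s, p.2.eval s)) <| by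
    simp only [List.mem_map, List.mem_append]
    rintro _ ⟨p, hp, rfl⟩ _ ⟨q, hq, rfl⟩ (hpq : p.1.eval s = q.1.eval s)
    rcases hp with hp | hp <;> rcases hq with hq | hq
    · exact hβ.1.consistent.eval_snd_eq_of_mem_ptos hp hq hpq
    · exact (hβ.2.2.2 p hp q hq).resolve_left (not_not.2 hpq)
    · exact ((hβ.2.2.2 q hq p hp).resolve_left (not_not.2 hpq.symm)).symm
    · exact hβ.2.1.consistent.eval_snd_eq_of_mem_ptos hp hq hpq
  exact ⟨f, fun p hp => hf _ (List.mem_map_of_mem hp)⟩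

lemma lookup_of_sat_star_ptoCells (hβ : betaSat A B s) {f : ℕ → ℕ}
    (hf : ∀ p ∈ B.spatial.ptos, f (p.1.eval s) = p.2.eval s) {D : Finset ℕ}
    (hD : B.spatial.absDom s \ A.spatial.absDom s ⊆ D)
    (hs : (A.spatial.star (ptoCells f D)).sat s h) {p : Trm × Trm} (hp : p ∈ B.spatial.ptos) :
    h.lookup (p.1.eval s) = some (p.2.eval s) := by
  by_cases hpA : p.1.eval s ∈ A.spatial.absDom s
  · obtain ⟨q, hq, hqp⟩ := mem_absDom.1 hpA
    rcases mem_arrs_or_ptos_of_mem_absArrays hq with hq | ⟨u, hu, hq₂⟩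
    · exact absurd (hβ.2.2.1 p hp q hq) (by omega)
    · have hpq : q.1.eval s = p.1.eval s := by rw [hq₂] at hqp; omega
      rw [← hpq, lookup_of_sat hs (List.mem_append_left _ hu)]
      simpa [hpq] using hβ.2.2.2 _ hu p hp
  · have hpD : p.1.eval s ∈ D := hD (Finset.mem_sdiff.2 ⟨mem_absDom_of_mem_ptos hp, hpA⟩)
    have := lookup_of_sat hs (p := (.const (p.1.eval s), .const (f (p.1.eval s))))
      (List.mem_append_right _ (by simpa [ptos_ptoCells] using hpD))
    simpa [Trm.eval, hf p hp] using this

lemma sat_star_arrCells (hβ : betaSat A B s) {f : ℕ → ℕ}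
    (hf : ∀ p ∈ B.spatial.ptos, f (p.1.eval s) = p.2.eval s)
    (hs : (A.spatial.star (ptoCells f (B.spatial.absDom s \ A.spatial.absDom s))).sat s h) :
    (B.spatial.star (arrCells (A.spatial.absDom s \ B.spatial.absDom s))).sat s h := by
  have hC := absArrays_arrCells (A.spatial.absDom s \ B.spatial.absDom s)
  refine sat_iff.2
    ⟨consistent_star_iff.2 ⟨hβ.2.1.consistent, consistent_of_absArrays_eq_cells hC, ?_⟩, ?_, ?_⟩
  · rw [absDom_of_absArrays_eq_cells hC]
    exact Finset.disjoint_sdiff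
  · rw [(sat_iff.1 hs).2.1, absDom, absDom, absDom_of_absArrays_eq_cells hC,
      absDom_of_absArrays_eq_cells (absArrays_ptoCells _ _), Finset.union_sdiff_self_eq_union,
      Finset.union_sdiff_self_eq_union, Finset.union_comm]
  · simp only [ptos, ptos_arrCells, List.append_nil]
    exact fun p hp => lookup_of_sat_star_ptoCells hβ hf subset_rfl hs hp

theorem hasBiabductionSolution_of_betaSat (hβ : betaSat A B s) : HasBiabductionSolution A B := by
  obtain ⟨f, hf⟩ := exists_fun_eq_of_betaSat hβ
  rw [List.forall_mem_append] at hf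
  set DA := A.spatial.absDom s
  set DB := B.spatial.absDom s
  set ts := A.trms ++ B.trms ++ (ptoCells f (DB \ DA)).trms ++ (arrCells (DA \ DB)).trms
  refine ⟨⟨pin s ts, ptoCells f (DB \ DA)⟩, ⟨.tru, arrCells (DA \ DB)⟩,
    ⟨s, _, ⟨hβ.1.1, sat_pin_iff.2 fun _ _ => rfl⟩,
      hβ.1.consistent.sat_star_ptoCells hf.1 Finset.disjoint_sdiff⟩, ?_⟩
  rintro s' h ⟨⟨-, hpin⟩, hs'⟩
  have hts : ∀ t ∈ ts, t.eval s' = t.eval s := sat_pin_iff.1 hpin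
  have hs : (A.spatial.star (ptoCells f (DB \ DA))).sat s h :=
    (sat_congr fun t ht => hts t <| by
      simp only [ts, trms, Spatial.trms, List.mem_append] at ht ⊢; tauto).1 hs'
  refine ⟨⟨(PureF.sat_congr fun t ht => hts t ?_).2 hβ.2.1.1, trivial⟩,
    (sat_congr fun t ht => hts t ?_).2 (sat_star_arrCells hβ hf.2 hs)⟩ <;>
  simp only [ts, trms, SymHeap.star, Spatial.trms, List.mem_append] at ht ⊢ <;> tauto

end SymHeap

theorem stmt_10_general (A B : SymHeap) :
    (∃ X Y : SymHeap, (A.star X).Satisfiable ∧ Entails (A.star X) (B.star Y)) ↔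
    (∃ s : Stack, betaSat A B s) :=
  ⟨fun ⟨_, _, ⟨s, _, hs⟩, hXY⟩ => ⟨s, SymHeap.betaSat_of_sat_of_entails hs hXY⟩,
    fun ⟨_, hβ⟩ => SymHeap.hasBiabductionSolution_of_betaSat hβ⟩

/-- For a biabduction instance `(A,B)` (with `A`, `B` satisfiable quantifier-free
symbolic heaps): the biabduction problem has a solution iff `β(A,B)` is
satisfiable over ℕ. -/
theorem stmt_10 (A B : SymHeap) (hA : A.Satisfiable) (hB : B.Satisfiable) :
    (∃ X Y : SymHeap, (A.star X).Satisfiable ∧ Entails (A.star X) (B.star Y)) ↔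
    (∃ s : Stack, betaSat A B s) :=
  stmt_10_general A B
end

section
/- Let (B, S) be a 3-partition instance with S = (k_1, …, k_{3m}) and Σ k_j = mB, B/4 < k_j < B/2. Define Ã_{B,S} = ⋀_{i=1}^{m} (d_{i+1} = d_i + B + 1) : ⊛_{i=1}^{m+1} array(d_i, d_i), and B̃_{B,S} = ⋀_{i=1}^{m} (d_{i+1} > d_i) ∧ ⋀_{j=1}^{3m} (d_1 ≤ a_j ∧ a_j + k_j < d_{m+1}) : ⊛_{i=1}^{m+1} array(d_i, d_i) * ⊛_{j=1}^{3m} array(a_j+1, a_j+k_j), and let A_{B,S} = ⋀_{i=1}^{m} (d_{i+1} = d_i + B + 1) ∧ ⋀_{j=1}^{3m} (d_1 ≤ a_j ∧ a_j + k_j < d_{m+1}) : ⊛_{i=1}^{m+1} array(d_i, d_i) * ⊛_{j=1}^{3m} array(a_j+1, a_j+k_j). Then the formulas β(Ã_{B,S}, B̃_{B,S}) and γ(A_{B,S}) are logically equivalent over ℕ: every stack satisfies one iff it satisfies the other. -/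
/-! ### The 3-partition reduction. Variables: `d_{i+1}` is `var i` for `i ∈ [0,m]`,
and `a_{j+1}` is `var (m+1+j)` for `j ∈ [0,3m)`. -/

/-- The symbolic heap `A_{B,S}`:
`⋀_{i=1}^{m} (d_{i+1} = dᵢ + B + 1) ∧ ⋀_{j=1}^{3m} (d₁ ≤ aⱼ ∧ aⱼ + kⱼ < d_{m+1})
 : ⊛_{i=1}^{m+1} array(dᵢ,dᵢ) * ⊛_{j=1}^{3m} array(aⱼ+1, aⱼ+kⱼ)`. -/
def heapABS (m B : ℕ) (k : Fin (3 * m) → ℕ) : SymHeap :=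
  ⟨PureF.and
      (bigAnd (List.ofFn fun i : Fin m =>
        PureF.eq (Trm.var (i.1 + 1)) (Trm.add (Trm.var i.1) (Trm.const (B + 1)))))
      (bigAnd (List.ofFn fun j : Fin (3 * m) =>
        PureF.and (PureF.le (Trm.var 0) (Trm.var (m + 1 + j.1)))
          (PureF.lt (Trm.add (Trm.var (m + 1 + j.1)) (Trm.const (k j))) (Trm.var m)))),
   Spatial.star
      (bigStar (List.ofFn fun i : Fin (m + 1) => Spatial.arr (Trm.var i.1) (Trm.var i.1)))
      (bigStar (List.ofFn fun j : Fin (3 * m) =>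
        Spatial.arr (Trm.add (Trm.var (m + 1 + j.1)) (Trm.const 1))
          (Trm.add (Trm.var (m + 1 + j.1)) (Trm.const (k j)))))⟩

/-- The symbolic heap `Ã_{B,S}`:
`⋀_{i=1}^{m} (d_{i+1} = dᵢ + B + 1) : ⊛_{i=1}^{m+1} array(dᵢ,dᵢ)`. -/
def heapAtil (m B : ℕ) : SymHeap :=
  ⟨bigAnd (List.ofFn fun i : Fin m =>
      PureF.eq (Trm.var (i.1 + 1)) (Trm.add (Trm.var i.1) (Trm.const (B + 1)))),
   bigStar (List.ofFn fun i : Fin (m + 1) => Spatial.arr (Trm.var i.1) (Trm.var i.1))⟩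

/-- The symbolic heap `B̃_{B,S}`:
`⋀_{i=1}^{m} (d_{i+1} > dᵢ) ∧ ⋀_{j=1}^{3m} (d₁ ≤ aⱼ ∧ aⱼ + kⱼ < d_{m+1})
 : ⊛_{i=1}^{m+1} array(dᵢ,dᵢ) * ⊛_{j=1}^{3m} array(aⱼ+1, aⱼ+kⱼ)`. -/
def heapBtil (m : ℕ) (k : Fin (3 * m) → ℕ) : SymHeap :=
  ⟨PureF.and
      (bigAnd (List.ofFn fun i : Fin m => PureF.lt (Trm.var i.1) (Trm.var (i.1 + 1))))
      (bigAnd (List.ofFn fun j : Fin (3 * m) =>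
        PureF.and (PureF.le (Trm.var 0) (Trm.var (m + 1 + j.1)))
          (PureF.lt (Trm.add (Trm.var (m + 1 + j.1)) (Trm.const (k j))) (Trm.var m)))),
   Spatial.star
      (bigStar (List.ofFn fun i : Fin (m + 1) => Spatial.arr (Trm.var i.1) (Trm.var i.1)))
      (bigStar (List.ofFn fun j : Fin (3 * m) =>
        Spatial.arr (Trm.add (Trm.var (m + 1 + j.1)) (Trm.const 1))
          (Trm.add (Trm.var (m + 1 + j.1)) (Trm.const (k j)))))⟩

/-- A complete 3-partition of `S = (k₁,…,k_{3m})` w.r.t. `B`: a partition of the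
indices into `m` groups of three, each of whose `k`-values sums to `B`. -/
def HasThreePartition (m B : ℕ) (k : Fin (3 * m) → ℕ) : Prop :=
  ∃ f : Fin (3 * m) → Fin m, ∀ i : Fin m,
    (Finset.univ.filter fun j => f j = i).card = 3 ∧
    ∑ j ∈ Finset.univ.filter (fun j => f j = i), k j = B

/-!
No pointers occur, so `β(Ã, B̃)` is just `γ(Ã) ∧ γ(B̃)`. The spatial parts of `B̃` and `A` coincide,
and the pure part of `A` is that of `Ã` together with the bounds on the `aⱼ` from `B̃`; the spacing
equations `d_{i+1} = dᵢ + B + 1` of `Ã` imply the ordering `dᵢ < d_{i+1}` of `B̃`. Finally the arrays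
of `Ã` are among those of `B̃`, so `γ(B̃)` already gives their well-definedness and disjointness.
-/

theorem PureF.sat_bigAnd (s : Stack) (l : List PureF) :
    (bigAnd l).sat s ↔ ∀ p ∈ l, p.sat s := by
  induction l with
  | nil => simp [bigAnd, PureF.sat]
  | cons p l ih => simp [bigAnd, PureF.sat, ih]

theorem Spatial.ptos_bigStar_s11 {l : List Spatial} (hl : ∀ F ∈ l, F.ptos = []) :
    (bigStar l).ptos = [] := by
  induction l with
  | nil => rfl
  | cons F l ih =>
    simp only [List.forall_mem_cons] at hl
    simp [bigStar, Spatial.ptos, hl.1, ih hl.2]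

theorem Spatial.ptos_bigStar_ofFn_arr {n : ℕ} (f g : Fin n → Trm) :
    (bigStar (List.ofFn fun i => Spatial.arr (f i) (g i))).ptos = [] :=
  Spatial.ptos_bigStar_s11 fun F hF => by
    obtain ⟨i, rfl⟩ := List.mem_ofFn.mp hF
    rfl

theorem betaSat_iff_of_ptos_eq_nil {A B : SymHeap} {s : Stack}
    (hA : A.spatial.ptos = []) (hB : B.spatial.ptos = []) :
    betaSat A B s ↔ gammaSat A s ∧ gammaSat B s := by
  simp [betaSat, hA, hB]

theorem gammaSat_of_absArrays_sublist {A A' : SymHeap} {s : Stack} (hpure : A.pure.sat s)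
    (hsub : A.spatial.absArrays.Sublist A'.spatial.absArrays) (hA' : gammaSat A' s) :
    gammaSat A s :=
  ⟨hpure, fun p hp => hA'.2.1 p (hsub.subset hp), hA'.2.2.sublist hsub⟩

theorem heapAtil_pure_sat_iff {m B : ℕ} {s : Stack} :
    (heapAtil m B).pure.sat s ↔ ∀ i : Fin m, s (i + 1) = s i + (B + 1) := by
  simp [heapAtil, PureF.sat_bigAnd, PureF.sat, Trm.eval]

theorem heapBtil_chain_sat_of_heapAtil_pure_sat {m B : ℕ} {s : Stack}
    (h : (heapAtil m B).pure.sat s) :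
    (bigAnd (List.ofFn fun i : Fin m => PureF.lt (Trm.var i.1) (Trm.var (i.1 + 1)))).sat s := by
  simp only [PureF.sat_bigAnd, List.forall_mem_ofFn_iff, PureF.sat, Trm.eval]
  intro i
  have := heapAtil_pure_sat_iff.mp h i
  omega

theorem gammaSat_heapABS_iff {m B : ℕ} {k : Fin (3 * m) → ℕ} {s : Stack} :
    gammaSat (heapABS m B k) s ↔ (heapAtil m B).pure.sat s ∧ gammaSat (heapBtil m k) s := by
  constructor
  · rintro ⟨⟨hAtil, hbounds⟩, hwd, hdisj⟩
    exact ⟨hAtil, ⟨heapBtil_chain_sat_of_heapAtil_pure_sat hAtil, hbounds⟩, hwd, hdisj⟩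
  · rintro ⟨hAtil, ⟨-, hbounds⟩, hwd, hdisj⟩
    exact ⟨⟨hAtil, hbounds⟩, hwd, hdisj⟩

theorem stmt_11_general (m B : ℕ) (k : Fin (3 * m) → ℕ)
    (s : Stack) :
    betaSat (heapAtil m B) (heapBtil m k) s ↔ gammaSat (heapABS m B k) s := by
  have hptos : (heapBtil m k).spatial.ptos = [] := by
    simp only [heapBtil, Spatial.ptos, Spatial.ptos_bigStar_ofFn_arr, List.append_nil]
  rw [betaSat_iff_of_ptos_eq_nil (Spatial.ptos_bigStar_ofFn_arr _ _) hptos, gammaSat_heapABS_iff]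
  have hsub : (heapAtil m B).spatial.absArrays.Sublist (heapBtil m k).spatial.absArrays :=
    List.sublist_append_left _ _
  exact ⟨fun ⟨hAtil, hBtil⟩ => ⟨hAtil.1, hBtil⟩,
    fun ⟨hpure, hBtil⟩ => ⟨gammaSat_of_absArrays_sublist hpure hsub hBtil, hBtil⟩⟩

/-- The Presburger equivalence `β(Ã_{B,S}, B̃_{B,S}) ≡ γ(A_{B,S})`:
every stack satisfies one iff it satisfies the other. -/
theorem stmt_11 (m B : ℕ) (k : Fin (3 * m) → ℕ)
    (hsum : ∑ j, k j = m * B)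
    (hbound : ∀ j, B < 4 * k j ∧ 2 * k j < B)
    (s : Stack) :
    betaSat (heapAtil m B) (heapBtil m k) s ↔ gammaSat (heapABS m B k) s :=
  stmt_11_general m B k s
end
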